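/- For any subset J ⊆ {1,...,n} the polynomial k_{n,J}(r,s,i,j) = tr(j ℓ^{[n]∖{n}}(r) s ℓ^{J}(r) i) on T*(𝔟 × ℂⁿ) is B-invariant: k_{n,J}(brb⁻¹, bsb⁻¹, bi, jb⁻¹) = k_{n,J}(r,s,i,j) for all b ∈ B. -/
import Mathlib

open Matrix

/-- `ℓ^J(r) = ∏_{k∈J} (r − r_{kk}·I)`, realized as the evaluation at `r` of the
(commutative) polynomial `∏_{k∈J} (X − r_{kk})`. -/
noncomputable def ellJ {n : ℕ} (J : Finset (Fin n)) (r : Matrix (Fin n) (Fin n) ℂ) :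
    Matrix (Fin n) (Fin n) ℂ :=
  Polynomial.aeval r (∏ k ∈ J, (Polynomial.X - Polynomial.C (r k k)))

lemma diag_mul_tri {n : ℕ} {M N : Matrix (Fin n) (Fin n) ℂ}
    (hM : M.BlockTriangular id) (hN : N.BlockTriangular id) (k : Fin n) :
    (M * N) k k = M k k * N k k := by
  rw [mul_apply]
  apply Finset.sum_eq_single k
  · intro j _ hj
    rcases lt_or_gt_of_ne hj with h | h
    · rw [hM h, zero_mul]
    · rw [hN h, mul_zero]
  · simp

lemma conjPow' {n : ℕ} (b r : Matrix (Fin n) (Fin n) ℂ) (h : b⁻¹ * b = 1)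
    (h' : b * b⁻¹ = 1) (k : ℕ) :
    (b * r * b⁻¹) ^ k = b * r ^ k * b⁻¹ := by
  induction k with
  | zero => rw [pow_zero, pow_zero, mul_one, h']
  | succ m ih =>
    rw [pow_succ, pow_succ, ih]
    have e : b * r ^ m * b⁻¹ * (b * r * b⁻¹) = b * r ^ m * (b⁻¹ * b) * (r * b⁻¹) := by
      simp only [Matrix.mul_assoc]
    rw [e, h, mul_one]
    simp only [Matrix.mul_assoc]

lemma aeval_conj {n : ℕ} (b r : Matrix (Fin n) (Fin n) ℂ) (h : b⁻¹ * b = 1) (h' : b * b⁻¹ = 1)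
    (p : Polynomial ℂ) :
    Polynomial.aeval (b * r * b⁻¹) p = b * Polynomial.aeval r p * b⁻¹ := by
  induction p using Polynomial.induction_on' with
  | add p q hp hq => simp [hp, hq, mul_add, add_mul]
  | monomial k a =>
    rw [Polynomial.aeval_monomial, Polynomial.aeval_monomial, conjPow' b r h h' k,
      Algebra.algebraMap_eq_smul_one]
    simp [smul_mul_assoc, mul_smul_comm]

/-- The polynomial `k_{n,J}(r,s,i,j) = j ℓ^{[n]∖{n}}(r) s ℓ^J(r) i` is
`B`-invariant (matrices of size `n+1`, so `Fin.last n` plays the role of the index `n`). -/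
theorem knJ_B_invariant (n : ℕ)
    (b r s : Matrix (Fin (n+1)) (Fin (n+1)) ℂ)
    (hb : b.BlockTriangular id) (hbu : IsUnit b)
    (hr : r.BlockTriangular id)
    (i j : Fin (n+1) → ℂ) (J : Finset (Fin (n+1))) :
    (j ᵥ* b⁻¹) ⬝ᵥ
        ((ellJ (Finset.univ.erase (Fin.last n)) (b * r * b⁻¹) * (b * s * b⁻¹)
            * ellJ J (b * r * b⁻¹)) *ᵥ (b *ᵥ i))
      = j ⬝ᵥ ((ellJ (Finset.univ.erase (Fin.last n)) r * s * ellJ J r) *ᵥ i) := by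
  have hdet : IsUnit b.det := (Matrix.isUnit_iff_isUnit_det b).mp hbu
  have hinv : b⁻¹ * b = 1 := Matrix.nonsing_inv_mul b hdet
  have hinv' : b * b⁻¹ = 1 := Matrix.mul_nonsing_inv b hdet
  haveI : Invertible b := b.invertibleOfIsUnitDet hdet
  have hbinv : (b⁻¹).BlockTriangular id := blockTriangular_inv_of_blockTriangular hb
  -- diagonal entries preserved
  have hdiag : ∀ k, (b * r * b⁻¹) k k = r k k := by
    intro k
    rw [diag_mul_tri (hb.mul hr) hbinv k, diag_mul_tri hb hr k]
    have : b k k * b⁻¹ k k = 1 := by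
      rw [← diag_mul_tri hb hbinv k, hinv', one_apply_eq]
    calc b k k * r k k * b⁻¹ k k = r k k * (b k k * b⁻¹ k k) := by ring
      _ = r k k := by rw [this, mul_one]
  have hell : ∀ (K : Finset (Fin (n+1))), ellJ K (b * r * b⁻¹) = b * ellJ K r * b⁻¹ := by
    intro K
    unfold ellJ
    simp only [hdiag]
    exact aeval_conj b r hinv hinv' _
  rw [hell, hell]
  set L := ellJ (Finset.univ.erase (Fin.last n)) r
  set R := ellJ J r
  have hK : b * L * b⁻¹ * (b * s * b⁻¹) * (b * R * b⁻¹) = b * (L * s * R) * b⁻¹ := by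
    calc b * L * b⁻¹ * (b * s * b⁻¹) * (b * R * b⁻¹)
        = b * L * (b⁻¹ * b) * s * (b⁻¹ * b) * R * b⁻¹ := by
          simp only [Matrix.mul_assoc]
      _ = b * (L * s * R) * b⁻¹ := by rw [hinv]; simp only [Matrix.mul_assoc, Matrix.one_mul]
  rw [hK]
  have h1 : b⁻¹ *ᵥ (b *ᵥ i) = i := by
    rw [Matrix.mulVec_mulVec, hinv, Matrix.one_mulVec]
  have h2 : (b * (L * s * R) * b⁻¹) *ᵥ (b *ᵥ i) = b *ᵥ ((L * s * R) *ᵥ i) := by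
    rw [← Matrix.mulVec_mulVec, ← Matrix.mulVec_mulVec, h1, Matrix.mulVec_mulVec]
  rw [h2, Matrix.dotProduct_mulVec, Matrix.vecMul_vecMul, hinv, Matrix.vecMul_one]
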